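/- arXiv:1507.02414 — 6 statements merged into one kernel-verified Lean document; each statement's English description precedes it below -/
import Mathlib

section
/- Let R = ⟨G,(s₀,t₀),C⟩ be a scenario on a path with s₀ ≤ left(R) ≤ right(R) ≤ t₀. Suppose (s,t), (s',t') ∈ C with t' ≤ t < s ≤ s'. Then every ride that is feasible for ⟨G,(s₀,t₀),C \ {(s,t)}⟩ is feasible for R; in particular removing (s,t) does not change the set of feasible rides. -/
/-! A walk on a path graph moves by one node per step, so by the discrete intermediate value
theorem it visits every node between two of its values. A ride satisfying `(s', t')` meets `s`
between the visits of `s'` and `t'`, and afterwards meets `t` before reaching `t'`. -/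

namespace RideSharing

/-- A ride in a graph with adjacency `adj`: a nonempty sequence of nodes where
consecutive nodes are adjacent. -/
def IsRide (adj : ℕ → ℕ → Prop) (π : List ℕ) : Prop :=
  π ≠ [] ∧ π.Chain' adj

/-- The cost of a ride: sum of the weights of traversed edges. -/
def cost (w : ℕ → ℕ → ℚ) : List ℕ → ℚ
  | [] => 0
  | [_] => 0
  | a :: b :: rest => w a b + cost w (b :: rest)

/-- A ride satisfies a request `(s,t)` if `s` occurs at a time step weakly before
an occurrence of `t`. -/
def Satisfies (π : List ℕ) (s t : ℕ) : Prop :=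
  ∃ i j : ℕ, i ≤ j ∧ π[i]? = some s ∧ π[j]? = some t

/-- `Pre π' π` : `π'` is obtained from `π` by (repeatedly) removing a contiguous
subsequence of nodes (the relation `π' ⪯ π` of the paper, stated with 0-based indices:
`π[1,i] , π[i',len]` becomes `π.take (i+1) ++ π.drop i'`). -/
inductive Pre : List ℕ → List ℕ → Prop
  | refl (π : List ℕ) : Pre π π
  | step (π' π : List ℕ) (i i' : ℕ) :
      i < i' → i' < π.length →
      (π[i + 1]? = π[i']? ∨ π[i]? = π[i' - 1]?) →
      Pre π' (π.take (i + 1) ++ π.drop i') → Pre π' π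

/-- A ride-sharing scenario. -/
structure Scenario where
  adj : ℕ → ℕ → Prop
  w : ℕ → ℕ → ℚ
  s0 : ℕ
  t0 : ℕ
  C : Finset (ℕ × ℕ)

def Feasible (R : Scenario) (π : List ℕ) : Prop :=
  IsRide R.adj π ∧ π.head? = some R.s0 ∧ π.getLast? = some R.t0 ∧
    ∀ r ∈ R.C, Satisfies π r.1 r.2

def Optimal (R : Scenario) (π : List ℕ) : Prop :=
  Feasible R π ∧ ∀ π', Feasible R π' → cost R.w π ≤ cost R.w π'

/-- The set `V_C` of endpoints of requests. -/
def VC (C : Finset (ℕ × ℕ)) : Finset ℕ := C.image Prod.fst ∪ C.image Prod.snd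

/-- The path graph on `{1,…,n}`. -/
def pathAdj (n : ℕ) (a b : ℕ) : Prop :=
  (b = a + 1 ∨ a = b + 1) ∧ 1 ≤ a ∧ a ≤ n ∧ 1 ≤ b ∧ b ≤ n

/-- The monotone segment of the path from `x` to `y`. -/
def seg (x y : ℕ) : List ℕ :=
  if x ≤ y then (List.range (y - x + 1)).map (fun k => x + k)
  else (List.range (x - y + 1)).map (fun k => x - k)

/-- The ride through a list of waypoints, concatenating monotone segments. -/
def rideThrough : List ℕ → List ℕ
  | [] => []
  | [x] => [x]
  | x :: y :: rest => seg x y ++ (rideThrough (y :: rest)).tail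

/-- Concatenation of rides (`π ↦ π'`), inserting the monotone connecting segment
if the endpoints differ. -/
def rconcat (a b : List ℕ) : List ℕ :=
  a ++ (seg (a.getLastD 0) (b.headD 0)).tail ++ b.tail

theorem _root_.List.exists_getElem?_eq_of_isChain_le_succ {l : List ℕ}
    (hl : l.IsChain fun a b => a ≤ b + 1) {i j c : ℕ} (hij : i ≤ j) (hj : j < l.length)
    (hic : c ≤ l[i]) (hjc : l[j] ≤ c) : ∃ k, i ≤ k ∧ k ≤ j ∧ l[k]? = some c := by
  induction j, hij using Nat.le_induction with
  | base => exact ⟨i, le_rfl, le_rfl, List.getElem?_eq_some_iff.mpr ⟨hj, le_antisymm hjc hic⟩⟩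
  | succ j hij ih =>
    rcases eq_or_lt_of_le hjc with heq | hlt
    · exact ⟨j + 1, by omega, le_rfl, List.getElem?_eq_some_iff.mpr ⟨hj, heq⟩⟩
    · have hstep := List.isChain_iff_getElem.mp hl j hj
      obtain ⟨k, hik, hkj, hk⟩ := ih (by omega) hic (by omega)
      exact ⟨k, hik, by omega, hk⟩

theorem isChain_le_succ_of_isChain_pathAdj {n : ℕ} {π : List ℕ}
    (hπ : π.IsChain (pathAdj n)) : π.IsChain fun a b => a ≤ b + 1 :=
  hπ.imp fun _ _ h => by rcases h.1 with h | h <;> omega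

theorem Satisfies.of_dominated {π : List ℕ} (hπ : π.IsChain fun a b => a ≤ b + 1)
    {s t s' t' : ℕ} (h : Satisfies π s' t') (ht : t' ≤ t) (hts : t ≤ s) (hs : s ≤ s') :
    Satisfies π s t := by
  obtain ⟨i', j', hij', hi', hj'⟩ := h
  obtain ⟨hi'len, rfl⟩ := List.getElem?_eq_some_iff.mp hi'
  obtain ⟨hj'len, rfl⟩ := List.getElem?_eq_some_iff.mp hj'
  obtain ⟨i, -, hij, hi⟩ := List.exists_getElem?_eq_of_isChain_le_succ hπ hij' hj'len hs
    (ht.trans hts)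
  obtain ⟨_, hival⟩ := List.getElem?_eq_some_iff.mp hi
  obtain ⟨j, hj, -, hjt⟩ := List.exists_getElem?_eq_of_isChain_le_succ hπ hij hj'len
    (hival ▸ hts) ht
  exact ⟨i, j, hj, hi, hjt⟩

theorem remove_dominated_request_general (n : ℕ) (w : ℕ → ℕ → ℚ)
    (s0 t0 : ℕ) (C : Finset (ℕ × ℕ))
    (s t s' t' : ℕ) (hmem' : (s', t') ∈ C.erase (s, t))
    (hdom : t' ≤ t ∧ t < s ∧ s ≤ s') :
    ∀ π, Feasible ⟨pathAdj n, w, s0, t0, C⟩ π ↔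
      Feasible ⟨pathAdj n, w, s0, t0, C.erase (s, t)⟩ π := by
  intro π
  refine ⟨fun ⟨hride, hhead, hlast, hsat⟩ =>
    ⟨hride, hhead, hlast, fun r hr => hsat r (Finset.mem_of_mem_erase hr)⟩, ?_⟩
  rintro ⟨hride, hhead, hlast, hsat⟩
  refine ⟨hride, hhead, hlast, fun r hr => ?_⟩
  by_cases hrst : r = (s, t)
  · subst hrst
    exact (hsat _ hmem').of_dominated (isChain_le_succ_of_isChain_pathAdj hride.2)
      hdom.1 hdom.2.1.le hdom.2.2
  · exact hsat r (Finset.mem_erase.mpr ⟨hrst, hr⟩)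

/-- on a path with `s₀ ≤ left(R) ≤ right(R) ≤ t₀`, a request `(s,t)`
dominated by `(s',t')` (i.e. `t' ≤ t < s ≤ s'`) can be removed without changing
the set of feasible rides. -/
theorem remove_dominated_request (n : ℕ) (w : ℕ → ℕ → ℚ)
    (s0 t0 : ℕ) (C : Finset (ℕ × ℕ)) (hst : s0 ≤ t0) (h1 : 1 ≤ s0) (h2 : t0 ≤ n)
    (hC : ∀ v ∈ VC C, s0 ≤ v ∧ v ≤ t0)
    (s t s' t' : ℕ) (hmem : (s, t) ∈ C) (hmem' : (s', t') ∈ C.erase (s, t))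
    (hdom : t' ≤ t ∧ t < s ∧ s ≤ s') :
    ∀ π, Feasible ⟨pathAdj n, w, s0, t0, C⟩ π ↔
      Feasible ⟨pathAdj n, w, s0, t0, C.erase (s, t)⟩ π :=
  remove_dominated_request_general n w s0 t0 C s t s' t' hmem' hdom

end RideSharing
end

section
/- Let R = ⟨G,(s₀,t₀),C⟩ be a scenario on a path with s₀ ≤ left(R) ≤ right(R) ≤ t₀, and let (s,t), (s',t') ∈ C with t < s, t' < s' and t' ≤ t ≤ s' ≤ s. Then every optimal ride for the scenario with request set C' = C \ {(s,t),(s',t')} ∪ {(s,t')} is also an optimal ride for R. -/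
namespace RideSharing

/-!
A ride satisfying `(s, t')` walks from `s` down to `t'`, so by the discrete intermediate value
theorem it meets `t` and `s'` in between and satisfies `(s, t)` and `(s', t')`: feasible rides
of the merged scenario are feasible for `R`.

Conversely, let `ρ` be feasible for `R` but miss `(s, t')`. Cut `ρ = A·B·N·S`, where `B` runs
from an occurrence of `s'` that is followed by `t'` to the first `s`, and `N` from there to a
later `t`. Reroute to `σ = A·[s'↑s]·N·[t↓m↑t]·S` with `m = min B ≤ t'`. Every request of `R`
satisfied by `ρ` is satisfied by `σ` (the nodes of `A·B` lie below `s`, those of `B` in `[m, s]`),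
and `σ` also satisfies `(s, t')`. Measuring positions by `coord`, `B` costs at least
`d(s', m) + d(m, s)` while the new pieces cost `d(s', s) + 2 d(m, t)`; as `m ≤ t ≤ s' ≤ s`,
`σ` is no more expensive than `ρ`. So an optimal ride of the merged scenario beats every
feasible ride of `R`.
-/

open List

def StepAdj (a b : ℕ) : Prop := b = a + 1 ∨ a = b + 1

lemma pathAdj.stepAdj {n a b : ℕ} (h : pathAdj n a b) : StepAdj a b := h.1

lemma pathAdj.symm {n a b : ℕ} (h : pathAdj n a b) : pathAdj n b a :=
  ⟨h.1.symm, h.2.2.2.1, h.2.2.2.2, h.2.1, h.2.2.1⟩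

lemma mem_Icc_of_isChain_pathAdj {n x : ℕ} {l : List ℕ} (hl : l.IsChain (pathAdj n))
    (hx : x ∈ l) (hne : l ≠ [x]) : 1 ≤ x ∧ x ≤ n := by
  induction l with
  | nil => simp at hx
  | cons a l ih =>
    cases l with
    | nil => simp_all
    | cons b l =>
      rw [isChain_cons_cons] at hl
      rcases mem_cons.mp hx with rfl | hx
      · exact ⟨hl.1.2.1, hl.1.2.2.1⟩
      · by_cases hb : b :: l = [x]
        · obtain ⟨rfl, -⟩ := cons_eq_cons.mp hb
          exact ⟨hl.1.2.2.2.1, hl.1.2.2.2.2⟩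
        · exact ih hl.2 hx hb

section Satisfies

variable {l l₁ l₂ : List ℕ} {a u v : ℕ}

@[simp] lemma not_satisfies_nil : ¬ Satisfies [] u v := by simp [Satisfies]

lemma satisfies_cons : Satisfies (a :: l) u v ↔ (u = a ∧ v ∈ a :: l) ∨ Satisfies l u v := by
  constructor
  · rintro ⟨_ | i, j, hij, hi, hj⟩
    · exact Or.inl ⟨by simpa [eq_comm] using hi, mem_of_getElem? hj⟩
    · obtain ⟨j, rfl⟩ : ∃ k, j = k + 1 := ⟨j - 1, by omega⟩
      exact Or.inr ⟨i, j, by omega, hi, hj⟩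
  · rintro (⟨rfl, hv⟩ | ⟨i, j, hij, hi, hj⟩)
    · obtain ⟨j, hj⟩ := mem_iff_getElem?.mp hv
      exact ⟨0, j, j.zero_le, rfl, hj⟩
    · exact ⟨i + 1, j + 1, by omega, hi, hj⟩

lemma satisfies_append :
    Satisfies (l₁ ++ l₂) u v ↔ Satisfies l₁ u v ∨ Satisfies l₂ u v ∨ (u ∈ l₁ ∧ v ∈ l₂) := by
  induction l₁ with
  | nil => simp
  | cons a l ih =>
    simp only [cons_append, satisfies_cons, ih, mem_cons, mem_append]
    tauto

lemma satisfies_iff_exists_append : Satisfies l u v ↔ ∃ l₁ l₂, l = l₁ ++ u :: l₂ ∧ v ∈ u :: l₂ := by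
  constructor
  · induction l with
    | nil => simp
    | cons a l ih =>
      rw [satisfies_cons]
      rintro (⟨rfl, hv⟩ | h)
      · exact ⟨[], l, rfl, hv⟩
      · obtain ⟨l₁, l₂, rfl, hv⟩ := ih h
        exact ⟨a :: l₁, l₂, rfl, hv⟩
  · rintro ⟨l₁, l₂, rfl, hv⟩
    exact satisfies_append.mpr (Or.inr (Or.inl (satisfies_cons.mpr (Or.inl ⟨rfl, hv⟩))))

lemma Satisfies.mem_left (h : Satisfies l u v) : u ∈ l := by
  obtain ⟨l₁, l₂, rfl, -⟩ := satisfies_iff_exists_append.mp h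
  simp

lemma Satisfies.mem_right (h : Satisfies l u v) : v ∈ l := by
  obtain ⟨l₁, l₂, rfl, hv⟩ := satisfies_iff_exists_append.mp h
  exact mem_append_right _ hv

lemma satisfies_append_cons_self_iff (hu : u ∉ l₁) :
    Satisfies (l₁ ++ u :: l₂) u v ↔ v ∈ u :: l₂ := by
  rw [satisfies_append, satisfies_cons]
  have : ¬ Satisfies l₁ u v := fun h => hu h.mem_left
  have : Satisfies l₂ u v → v ∈ u :: l₂ := fun h => mem_cons_of_mem _ h.mem_right
  tauto

end Satisfies

section Glue

variable {α : Type*} {A B l : List α} {x y z : α}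

def glue (A B : List α) : List α := A ++ B.tail

def Joins (l : List α) (x y : α) : Prop := l.head? = some x ∧ l.getLast? = some y

lemma Joins.ne_nil (h : Joins l x y) : l ≠ [] := by
  rintro rfl; simp [Joins] at h

lemma Joins.reverse (h : Joins l x y) : Joins l.reverse y x := by
  simpa [Joins, and_comm] using h

lemma glue_eq_append_cons (hA : A.getLast? = some y) (hB : B.head? = some y) :
    ∃ A' B', A = A' ++ [y] ∧ B = y :: B' ∧ glue A B = A' ++ y :: B' := by
  obtain ⟨A', rfl⟩ := getLast?_eq_some_iff.mp hA
  obtain ⟨B', rfl⟩ := head?_eq_some_iff.mp hB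
  exact ⟨A', B', rfl, rfl, by simp [glue]⟩

lemma head?_glue (hA : A.getLast? = some y) (hB : B.head? = some y) :
    (glue A B).head? = A.head? := by
  obtain ⟨A', B', rfl, rfl, h⟩ := glue_eq_append_cons hA hB
  rw [h]
  cases A' <;> rfl

lemma getLast?_glue (hA : A.getLast? = some y) (hB : B.head? = some y) :
    (glue A B).getLast? = B.getLast? := by
  obtain ⟨A', B', rfl, rfl, h⟩ := glue_eq_append_cons hA hB
  rw [h, getLast?_append_cons]

lemma Joins.glue (hA : Joins A x y) (hB : Joins B y z) : Joins (glue A B) x z :=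
  ⟨(head?_glue hA.2 hB.1).trans hA.1, (getLast?_glue hA.2 hB.1).trans hB.2⟩

lemma mem_glue (hA : A.getLast? = some y) (hB : B.head? = some y) :
    x ∈ glue A B ↔ x ∈ A ∨ x ∈ B := by
  obtain ⟨A', B', rfl, rfl, h⟩ := glue_eq_append_cons hA hB
  rw [h]
  simp only [mem_append, mem_cons]
  tauto

lemma isChain_glue {R : α → α → Prop} (hA : A.getLast? = some y) (hB : B.head? = some y) :
    (glue A B).IsChain R ↔ A.IsChain R ∧ B.IsChain R := by
  obtain ⟨A', B', rfl, rfl, h⟩ := glue_eq_append_cons hA hB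
  rw [h, isChain_split]

end Glue

lemma satisfies_of_getLast? {A : List ℕ} {y u : ℕ} (hA : A.getLast? = some y) (hu : u ∈ A) :
    Satisfies A u y := by
  obtain ⟨l₁, l₂, rfl⟩ := append_of_mem hu
  rw [getLast?_append_cons] at hA
  exact satisfies_iff_exists_append.mpr ⟨l₁, l₂, rfl, mem_of_getLast? hA⟩

lemma satisfies_glue {A B : List ℕ} {y u v : ℕ} (hA : A.getLast? = some y)
    (hB : B.head? = some y) :
    Satisfies (glue A B) u v ↔ Satisfies A u v ∨ Satisfies B u v ∨ (u ∈ A ∧ v ∈ B) := by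
  obtain ⟨B, rfl⟩ := head?_eq_some_iff.mp hB
  have hyA : y ∈ A := mem_of_getLast? hA
  rw [show glue A (y :: B) = A ++ B from rfl, satisfies_append, satisfies_cons, mem_cons]
  constructor
  · tauto
  · rintro (h | (⟨rfl, rfl | hv⟩ | h) | ⟨hu, rfl | hv⟩)
    exacts [Or.inl h, Or.inl (satisfies_of_getLast? hA hyA), Or.inr (Or.inr ⟨hyA, hv⟩),
      Or.inr (Or.inl h), Or.inl (satisfies_of_getLast? hA hu), Or.inr (Or.inr ⟨hu, hv⟩)]

section Cost

variable {w : ℕ → ℕ → ℚ}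

lemma cost_append_cons (l₁ l₂ : List ℕ) (a : ℕ) :
    cost w (l₁ ++ a :: l₂) = cost w (l₁ ++ [a]) + cost w (a :: l₂) := by
  induction l₁ with
  | nil => simp [cost]
  | cons b l ih =>
    cases l with
    | nil => simp [cost]
    | cons c l =>
      simp only [cons_append, cost] at ih ⊢
      rw [ih, add_assoc]

lemma cost_glue {A B : List ℕ} {y : ℕ} (hA : A.getLast? = some y) (hB : B.head? = some y) :
    cost w (glue A B) = cost w A + cost w B := by
  obtain ⟨A', B', rfl, rfl, h⟩ := glue_eq_append_cons hA hB
  rw [h, cost_append_cons]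

lemma abs_sub_le_cost (f : ℕ → ℚ) {l : List ℕ} {x y : ℕ}
    (hl : l.IsChain fun a b => |f b - f a| ≤ w a b) (h : Joins l x y) :
    |f y - f x| ≤ cost w l := by
  induction l generalizing x with
  | nil => simp [Joins] at h
  | cons a l ih =>
    obtain ⟨ha, hlast⟩ := h
    cases ha
    cases l with
    | nil => cases hlast; simp [cost]
    | cons b l =>
      rw [isChain_cons_cons] at hl
      have := ih hl.2 ⟨rfl, by simpa using hlast⟩
      simp only [cost]
      linarith [abs_sub_le (f y) (f b) (f a), hl.1]

lemma cost_eq_sub (f : ℕ → ℚ) {l : List ℕ} {x y : ℕ}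
    (hl : l.IsChain fun a b => w a b = f b - f a) (h : Joins l x y) :
    cost w l = f y - f x := by
  induction l generalizing x with
  | nil => simp [Joins] at h
  | cons a l ih =>
    obtain ⟨ha, hlast⟩ := h
    cases ha
    cases l with
    | nil => cases hlast; simp [cost]
    | cons b l =>
      rw [isChain_cons_cons] at hl
      simp only [cost, hl.1, ih hl.2 ⟨rfl, by simpa using hlast⟩]
      ring

lemma abs_sub_add_abs_sub_le_cost (f : ℕ → ℚ) {l : List ℕ} {x y m : ℕ}
    (hl : l.IsChain fun a b => |f b - f a| ≤ w a b) (h : Joins l x y) (hm : m ∈ l) :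
    |f m - f x| + |f y - f m| ≤ cost w l := by
  obtain ⟨l₁, l₂, rfl⟩ := append_of_mem hm
  rw [isChain_split] at hl
  have h₁ : Joins (l₁ ++ [m]) x m := ⟨by cases l₁ <;> simpa using h.1, by simp⟩
  have h₂ : Joins (m :: l₂) m y := ⟨rfl, by simpa using h.2⟩
  rw [cost_append_cons]
  exact add_le_add (abs_sub_le_cost f hl.1 h₁) (abs_sub_le_cost f hl.2 h₂)

end Cost

section Coord

variable {w : ℕ → ℕ → ℚ}

def coord (w : ℕ → ℕ → ℚ) (a : ℕ) : ℚ := ∑ k ∈ Finset.range a, w k (k + 1)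

lemma coord_succ (a : ℕ) : coord w (a + 1) = coord w a + w a (a + 1) :=
  Finset.sum_range_succ _ _

lemma monotone_coord (hw : ∀ a, 0 ≤ w a (a + 1)) : Monotone (coord w) :=
  monotone_nat_of_le_succ fun a => by rw [coord_succ]; linarith [hw a]

lemma abs_coord_sub_le (hw : ∀ a, 0 ≤ w a (a + 1)) (hwsym : ∀ a b, w a b = w b a) {a b : ℕ}
    (h : StepAdj a b) : |coord w b - coord w a| ≤ w a b := by
  rcases h with rfl | rfl
  · rw [coord_succ, add_sub_cancel_left, abs_of_nonneg (hw a)]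
  · rw [coord_succ, sub_add_cancel_left, abs_neg, abs_of_nonneg (hw b), hwsym]

end Coord

def ascent (a b : ℕ) : List ℕ := range' a (b + 1 - a)

def detour (m r : ℕ) : List ℕ := glue (ascent m r).reverse (ascent m r)

section Ascent

variable {w : ℕ → ℕ → ℚ} {n a b m r x : ℕ}

lemma mem_ascent : x ∈ ascent a b ↔ a ≤ x ∧ x ≤ b := by
  simp only [ascent, mem_range'_1]
  omega

lemma joins_ascent (h : a ≤ b) : Joins (ascent a b) a b := by
  simp only [Joins, ascent, head?_range', getLast?_range']
  constructor <;> split_ifs <;> first | omega | (congr 1 <;> omega)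

lemma isChain_succ_ascent : (ascent a b).IsChain fun x y => y = x + 1 :=
  isChain_range' _ _ _

lemma isChain_ascent (ha : 1 ≤ a) (hb : b ≤ n) : (ascent a b).IsChain (pathAdj n) :=
  isChain_succ_ascent.imp_of_mem_imp fun x y hx hy hxy => by
    rw [mem_ascent] at hx hy
    exact ⟨Or.inl hxy, by omega, by omega, by omega, by omega⟩

lemma cost_ascent (h : a ≤ b) : cost w (ascent a b) = coord w b - coord w a :=
  cost_eq_sub _ (isChain_succ_ascent.imp fun x y hxy => by rw [hxy, coord_succ]; ring)
    (joins_ascent h)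

lemma cost_reverse_ascent (hwsym : ∀ a b, w a b = w b a) (h : a ≤ b) :
    cost w (ascent a b).reverse = coord w b - coord w a := by
  have hl : (ascent a b).reverse.IsChain fun x y => w x y = -coord w y - -coord w x :=
    isChain_reverse.mpr <| isChain_succ_ascent.imp fun x y hxy => by
      rw [hxy, coord_succ, hwsym]; ring
  rw [cost_eq_sub _ hl (joins_ascent h).reverse]
  ring

lemma joins_detour (h : m ≤ r) : Joins (detour m r) r r :=
  (joins_ascent h).reverse.glue (joins_ascent h)

lemma mem_detour (h₁ : m ≤ x) (h₂ : x ≤ r) : x ∈ detour m r :=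
  (mem_glue (joins_ascent (h₁.trans h₂)).reverse.2 (joins_ascent (h₁.trans h₂)).1).mpr
    (Or.inr (mem_ascent.mpr ⟨h₁, h₂⟩))

lemma isChain_detour (hm : 1 ≤ m) (hr : r ≤ n) (h : m ≤ r) : (detour m r).IsChain (pathAdj n) :=
  (isChain_glue (joins_ascent h).reverse.2 (joins_ascent h).1).mpr
    ⟨isChain_reverse.mpr ((isChain_ascent hm hr).imp fun _ _ => pathAdj.symm),
      isChain_ascent hm hr⟩

lemma cost_detour (hwsym : ∀ a b, w a b = w b a) (h : m ≤ r) :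
    cost w (detour m r) = 2 * (coord w r - coord w m) := by
  rw [detour, cost_glue (joins_ascent h).reverse.2 (joins_ascent h).1,
    cost_reverse_ascent hwsym h, cost_ascent h]
  ring

end Ascent

section StepAdj

variable {l : List ℕ} {a b c x y : ℕ}

lemma mem_of_isChain_stepAdj (hl : l.IsChain StepAdj) (h : Joins l x y) (hc₁ : min x y ≤ c)
    (hc₂ : c ≤ max x y) : c ∈ l := by
  induction l generalizing x with
  | nil => simp [Joins] at h
  | cons a l ih =>
    obtain ⟨ha, hlast⟩ := h
    cases ha
    cases l with
    | nil =>
      obtain rfl : a = y := by simpa using hlast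
      simp; omega
    | cons b l =>
      rw [isChain_cons_cons] at hl
      by_cases hca : c = a
      · simp [hca]
      · refine mem_cons_of_mem _ (ih hl.2 ⟨rfl, by simpa using hlast⟩ ?_ ?_) <;>
          rcases hl.1 with rfl | rfl <;> omega

lemma le_of_mem_of_isChain_stepAdj {P : List ℕ} (hl : (P ++ [c]).IsChain StepAdj)
    (hhead : (P ++ [c]).head? = some a) (ha : a ≤ c) (hc : c ∉ P) : ∀ x ∈ P ++ [c], x ≤ c := by
  induction P generalizing a with
  | nil => simp
  | cons p P ih =>
    obtain rfl : p = a := by simpa using hhead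
    obtain ⟨b, hb⟩ : ∃ b, (P ++ [c]).head? = some b := ⟨_, head?_eq_some_head (by simp)⟩
    rw [cons_append, isChain_cons] at hl
    have hpb := hl.1 b hb
    have hpc : p ≠ c := fun h => hc (h ▸ mem_cons_self)
    have hbc : b ≤ c := by rcases hpb with rfl | rfl <;> omega
    intro x hx
    rcases mem_cons.mp hx with rfl | hx
    · exact ha
    · exact ih hl.2 hb hbc (fun h => hc (mem_cons_of_mem _ h)) x hx

lemma Satisfies.of_between (hl : l.IsChain StepAdj) (h : Satisfies l a b) (hc₁ : min a b ≤ c)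
    (hc₂ : c ≤ max a b) : Satisfies l a c ∧ Satisfies l c b := by
  obtain ⟨l₁, l₂, rfl, hb⟩ := satisfies_iff_exists_append.mp h
  obtain ⟨K₁, K₂, hK⟩ := append_of_mem hb
  have hsplit : l₁ ++ a :: l₂ = (l₁ ++ K₁) ++ b :: K₂ := by rw [hK, append_assoc]
  have hchain : (K₁ ++ [b]).IsChain StepAdj :=
    (isChain_split.mp (hsplit ▸ hl)).1.infix ⟨l₁, [], by simp⟩
  have hjoin : Joins (K₁ ++ [b]) a b := ⟨by cases K₁ <;> simp_all, by simp⟩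
  have hc : c ∈ K₁ ++ [b] := mem_of_isChain_stepAdj hchain hjoin hc₁ hc₂
  refine ⟨satisfies_iff_exists_append.mpr ⟨l₁, l₂, rfl, ?_⟩, ?_⟩
  · rw [hK]; simp only [mem_append, mem_cons] at hc ⊢; tauto
  · rw [hsplit, satisfies_append]
    rcases mem_append.mp hc with hc | hc
    · exact Or.inr (Or.inr ⟨mem_append_right _ hc, mem_cons_self⟩)
    · rw [mem_singleton.mp hc]
      exact Or.inr (Or.inl (satisfies_cons.mpr (Or.inl ⟨rfl, mem_cons_self⟩)))

end StepAdj

section Splice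

variable {A B U N D S Q Q' : List ℕ} {p q r u v x : ℕ}

lemma mem_glue_insert (hN : N.getLast? = some r) (hD : Joins D r r) (hS : S.head? = some r)
    (hx : x ∈ glue N S) : x ∈ glue N (glue D S) := by
  have hDS : (glue D S).head? = some r := (head?_glue hD.2 hS).trans hD.1
  rw [mem_glue hN hDS, mem_glue hD.2 hS]
  rw [mem_glue hN hS] at hx
  tauto

lemma Satisfies.glue_insert (hN : N.getLast? = some r) (hD : Joins D r r)
    (hS : S.head? = some r) (h : Satisfies (glue N S) u v) :
    Satisfies (glue N (glue D S)) u v := by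
  have hDS : (glue D S).head? = some r := (head?_glue hD.2 hS).trans hD.1
  rw [satisfies_glue hN hS] at h
  rw [satisfies_glue hN hDS, satisfies_glue hD.2 hS, mem_glue hD.2 hS]
  tauto

lemma Satisfies.reroute (hA : A.getLast? = some p) (hB : Joins B p q) (hU : Joins U p q)
    (hQ : Q.head? = some q) (hQ' : Q'.head? = some q)
    (hu : u ∈ glue A B → u ∈ glue A U) (hv : v ∈ B → v ∈ Q')
    (hQQ' : Satisfies Q u v → Satisfies Q' u v) (hvQ : v ∈ Q → v ∈ Q')
    (h : Satisfies (glue (glue A B) Q) u v) : Satisfies (glue (glue A U) Q') u v := by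
  have hAB : (glue A B).getLast? = some q := (getLast?_glue hA hB.1).trans hB.2
  have hAU : (glue A U).getLast? = some q := (getLast?_glue hA hU.1).trans hU.2
  have memAB (x : ℕ) : x ∈ glue A B ↔ x ∈ A ∨ x ∈ B := mem_glue hA hB.1
  rw [satisfies_glue hAB hQ, satisfies_glue hA hB.1] at h
  rw [satisfies_glue hAU hQ']
  rcases h with (h | h | ⟨huA, hvB⟩) | h | ⟨huAB, hvQ'⟩
  · exact Or.inl ((satisfies_glue hA hU.1).mpr (Or.inl h))
  · exact Or.inr (Or.inr ⟨hu ((memAB u).mpr (Or.inr h.mem_left)), hv h.mem_right⟩)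
  · exact Or.inr (Or.inr ⟨hu ((memAB u).mpr (Or.inl huA)), hv hvB⟩)
  · exact Or.inr (Or.inl (hQQ' h))
  · exact Or.inr (Or.inr ⟨hu huAB, hvQ hvQ'⟩)

end Splice

lemma exists_decomposition_of_not_satisfies {ρ : List ℕ} {s₀ t₀ s t s' t' : ℕ}
    (hρ : ρ.IsChain StepAdj) (hρj : Joins ρ s₀ t₀) (hs₀ : s₀ ≤ s) (hts : t ≠ s)
    (hst : Satisfies ρ s t) (hst' : Satisfies ρ s' t') (hnot : ¬ Satisfies ρ s t') :
    ∃ A B N S, ρ = glue (glue A B) (glue N S) ∧ Joins A s₀ s' ∧ Joins B s' s ∧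
      Joins N s t ∧ Joins S t t₀ ∧ t' ∈ B ∧ ∀ x ∈ glue A B, x ≤ s := by
  -- cut at the first `s`: the part of `ρ` before it then stays below `s`
  obtain ⟨P, Q, rfl, hsP⟩ := eq_append_cons_of_mem hst.mem_left
  have hsQ (v : ℕ) := satisfies_append_cons_self_iff (l₂ := Q) (v := v) hsP
  have ht'Q : t' ∉ s :: Q := fun h => hnot ((hsQ t').mpr h)
  have htQ : t ∈ Q := by simpa [hts] using (hsQ t).mp hst
  have hP : Satisfies P s' t' := by
    rcases satisfies_append.mp hst' with h | h | h
    · exact h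
    · exact absurd h.mem_right ht'Q
    · exact absurd h.2 ht'Q
  have hbound : ∀ x ∈ P ++ [s], x ≤ s :=
    le_of_mem_of_isChain_stepAdj (isChain_split.mp hρ).1 (by cases P <;> simpa using hρj.1) hs₀ hsP
  obtain ⟨A, B, rfl, ht'B⟩ := satisfies_iff_exists_append.mp hP
  obtain ⟨N, S, rfl⟩ := append_of_mem htQ
  refine ⟨A ++ [s'], s' :: (B ++ [s]), s :: (N ++ [t]), t :: S, by simp [glue],
    ⟨by cases A <;> simpa using hρj.1, by simp⟩, ⟨rfl, by simp [getLast?_cons]⟩,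
    ⟨rfl, by simp [getLast?_cons]⟩, ⟨rfl, ?_⟩, ?_, ?_⟩
  · have := hρj.2
    rwa [getLast?_append_cons, ← cons_append, getLast?_append_cons] at this
  · simp only [mem_cons, mem_append] at ht'B ⊢
    tauto
  · simpa [glue] using hbound

def reroute (A N S : List ℕ) (p q m r : ℕ) : List ℕ :=
  glue (glue A (ascent p q)) (glue N (glue (detour m r) S))

section Reroute

variable {A B N S : List ℕ} {n p q m r x y : ℕ}

lemma joins_reroute (hA : Joins A x p) (hN : Joins N q r) (hS : Joins S r y) (hmr : m ≤ r)
    (hpq : p ≤ q) : Joins (reroute A N S p q m r) x y :=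
  (hA.glue (joins_ascent hpq)).glue (hN.glue ((joins_detour hmr).glue hS))

lemma isChain_reroute (hA : Joins A x p) (hN : Joins N q r) (hS : Joins S r y)
    (hAc : A.IsChain (pathAdj n)) (hNc : N.IsChain (pathAdj n)) (hSc : S.IsChain (pathAdj n))
    (hm : 1 ≤ m) (hmr : m ≤ r) (hrp : r ≤ p) (hpq : p ≤ q) (hq : q ≤ n) :
    (reroute A N S p q m r).IsChain (pathAdj n) := by
  have hU := joins_ascent hpq
  have hD := joins_detour hmr
  rw [reroute, isChain_glue (hA.glue hU).2 (hN.glue (hD.glue hS)).1, isChain_glue hA.2 hU.1,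
    isChain_glue hN.2 (hD.glue hS).1, isChain_glue hD.2 hS.1]
  exact ⟨⟨hAc, isChain_ascent (by omega) hq⟩, hNc, isChain_detour hm (by omega) hmr, hSc⟩

lemma cost_reroute_le {w : ℕ → ℕ → ℚ} (hw : ∀ a, 0 ≤ w a (a + 1))
    (hwsym : ∀ a b, w a b = w b a) (hA : A.getLast? = some p) (hB : Joins B p q)
    (hN : Joins N q r) (hS : S.head? = some r) (hBc : B.IsChain StepAdj) (hm : m ∈ B)
    (hmr : m ≤ r) (hrp : r ≤ p) (hpq : p ≤ q) :
    cost w (reroute A N S p q m r) ≤ cost w (glue (glue A B) (glue N S)) := by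
  have hU := joins_ascent hpq
  have hD := joins_detour hmr
  have hDS : (glue (detour m r) S).head? = some r := (head?_glue hD.2 hS).trans hD.1
  rw [reroute, cost_glue ((getLast?_glue hA hU.1).trans hU.2) ((head?_glue hN.2 hDS).trans hN.1),
    cost_glue ((getLast?_glue hA hB.1).trans hB.2) ((head?_glue hN.2 hS).trans hN.1),
    cost_glue hA hU.1, cost_glue hA hB.1, cost_glue hN.2 hDS, cost_glue hN.2 hS,
    cost_glue hD.2 hS, cost_ascent hpq, cost_detour hwsym hmr]
  have hB' := abs_sub_add_abs_sub_le_cost (coord w)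
    (hBc.imp fun _ _ h => abs_coord_sub_le hw hwsym h) hB hm
  linarith [neg_abs_le (coord w m - coord w p), le_abs_self (coord w q - coord w m),
    monotone_coord hw hrp]

end Reroute

lemma mem_VC_fst {C : Finset (ℕ × ℕ)} {r : ℕ × ℕ} (h : r ∈ C) : r.1 ∈ VC C :=
  Finset.mem_union_left _ (Finset.mem_image_of_mem _ h)

lemma exists_feasible_merge_cost_le {n s0 t0 s t s' t' : ℕ} {w : ℕ → ℕ → ℚ}
    {C : Finset (ℕ × ℕ)} {ρ : List ℕ} (hwpos : ∀ a b, 0 < w a b)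
    (hwsym : ∀ a b, w a b = w b a) (h2 : t0 ≤ n) (hC : ∀ v ∈ VC C, s0 ≤ v ∧ v ≤ t0)
    (hmem : (s, t) ∈ C) (hmem' : (s', t') ∈ C) (hts : t < s)
    (hord : t' ≤ t ∧ t ≤ s' ∧ s' ≤ s) (hρ : Feasible ⟨pathAdj n, w, s0, t0, C⟩ ρ)
    (hnot : ¬ Satisfies ρ s t') :
    ∃ σ, Feasible ⟨pathAdj n, w, s0, t0, insert (s, t') ((C.erase (s, t)).erase (s', t'))⟩ σ ∧
      cost w σ ≤ cost w ρ := by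
  obtain ⟨⟨-, hρc⟩, hhead, hlast, hsat⟩ := hρ
  replace hρc : ρ.IsChain (pathAdj n) := hρc
  dsimp only at hhead hlast hsat
  obtain ⟨ht't, hts', hs's⟩ := hord
  obtain ⟨hs0s, hst0⟩ := hC s (mem_VC_fst hmem)
  obtain ⟨A, B, N, S, rfl, hA, hB, hN, hS, ht'B, hle⟩ :=
    exists_decomposition_of_not_satisfies (hρc.imp fun _ _ => pathAdj.stepAdj)
      ⟨hhead, hlast⟩ hs0s hts.ne (hsat _ hmem) (hsat _ hmem') hnot
  rw [isChain_glue (hA.glue hB).2 (hN.glue hS).1, isChain_glue hA.2 hB.1,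
    isChain_glue hN.2 hS.1] at hρc
  obtain ⟨⟨hAc, hBc⟩, hNc, hSc⟩ := hρc
  obtain ⟨m, hmB, hmin⟩ := B.toFinset.exists_min_image id ⟨t', mem_toFinset.mpr ht'B⟩
  simp only [mem_toFinset, id] at hmB hmin
  have hmt := (hmin t' ht'B).trans ht't
  have hm1 : 1 ≤ m := (mem_Icc_of_isChain_pathAdj hBc hmB fun h => by
    simp [h, Joins] at hB; omega).1
  have hU := joins_ascent hs's
  have hD := joins_detour hmt
  have hAU := hA.glue hU
  have hNDS := hN.glue (hD.glue hS)
  have hσ := joins_reroute hA hN hS hmt hs's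
  have hu (u : ℕ) (hu : s0 ≤ u) (huAB : u ∈ glue A B) : u ∈ glue A (ascent s' s) := by
    have hAUc := (isChain_glue hA.2 hU.1).mpr ⟨hAc, isChain_ascent (by omega) (by omega)⟩
    have := hle u huAB
    exact mem_of_isChain_stepAdj (hAUc.imp fun _ _ => pathAdj.stepAdj) hAU (by omega) (by omega)
  have hv (v : ℕ) (hv : v ∈ B) : v ∈ glue N (glue (detour m t) S) := by
    have hvs := hle v ((mem_glue hA.2 hB.1).mpr (Or.inr hv))
    rw [mem_glue hN.2 (hD.glue hS).1, mem_glue hD.2 hS.1]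
    rcases le_or_gt v t with hvt | hvt
    · exact Or.inr (Or.inl (mem_detour (hmin v hv) hvt))
    · exact Or.inr (Or.inr (mem_of_isChain_stepAdj (hSc.imp fun _ _ => pathAdj.stepAdj) hS
        (by omega) (by omega)))
  refine ⟨_, ⟨⟨hσ.ne_nil, isChain_reroute hA hN hS hAc hNc hSc hm1 hmt hts' hs's (by omega)⟩,
    hσ.1, hσ.2, fun r hr => ?_⟩, cost_reroute_le (fun a => (hwpos a (a + 1)).le) hwsym hA.2 hB
      hN hS.1 (hBc.imp fun _ _ => pathAdj.stepAdj) hmB hmt hts' hs's⟩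
  rcases Finset.mem_insert.mp hr with rfl | hr
  · exact (satisfies_glue hAU.2 hNDS.1).mpr
      (Or.inr (Or.inr ⟨mem_of_getLast? hAU.2, hv t' ht'B⟩))
  · have hrC := Finset.mem_of_mem_erase (Finset.mem_of_mem_erase hr)
    exact (hsat r hrC).reroute hA.2 hB hU (hN.glue hS).1 hNDS.1
      (hu _ (hC _ (mem_VC_fst hrC)).1) (hv _) (Satisfies.glue_insert hN.2 hD hS.1)
      (mem_glue_insert hN.2 hD hS.1)

lemma feasible_of_feasible_merge {n s0 t0 s t s' t' : ℕ} {w : ℕ → ℕ → ℚ}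
    {C : Finset (ℕ × ℕ)} {π : List ℕ} (hord : t' ≤ t ∧ t ≤ s' ∧ s' ≤ s)
    (hπ : Feasible ⟨pathAdj n, w, s0, t0, insert (s, t') ((C.erase (s, t)).erase (s', t'))⟩ π) :
    Feasible ⟨pathAdj n, w, s0, t0, C⟩ π := by
  obtain ⟨hride, hhead, hlast, hsat⟩ := hπ
  refine ⟨hride, hhead, hlast, fun r hr => ?_⟩
  have hl : π.IsChain StepAdj := hride.2.imp fun _ _ => pathAdj.stepAdj
  have hst' : Satisfies π s t' := hsat _ (Finset.mem_insert_self _ _)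
  by_cases hr₁ : r = (s, t)
  · subst hr₁
    exact (hst'.of_between hl (by omega) (by omega)).1
  by_cases hr₂ : r = (s', t')
  · subst hr₂
    exact (hst'.of_between hl (by omega) (by omega)).2
  exact hsat r (Finset.mem_insert_of_mem
    (Finset.mem_erase_of_ne_of_mem hr₂ (Finset.mem_erase_of_ne_of_mem hr₁ hr)))

theorem merge_requests_optimal_general (n : ℕ) (w : ℕ → ℕ → ℚ)
    (hwpos : ∀ a b, 0 < w a b) (hwsym : ∀ a b, w a b = w b a)
    (s0 t0 : ℕ) (C : Finset (ℕ × ℕ)) (h2 : t0 ≤ n)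
    (hC : ∀ v ∈ VC C, s0 ≤ v ∧ v ≤ t0)
    (s t s' t' : ℕ) (hmem : (s, t) ∈ C) (hmem' : (s', t') ∈ C)
    (hts : t < s)
    (hord : t' ≤ t ∧ t ≤ s' ∧ s' ≤ s)
    (π : List ℕ)
    (hopt : Optimal ⟨pathAdj n, w, s0, t0,
        insert (s, t') ((C.erase (s, t)).erase (s', t'))⟩ π) :
    Optimal ⟨pathAdj n, w, s0, t0, C⟩ π := by
  obtain ⟨hπ, hmin⟩ := hopt
  refine ⟨feasible_of_feasible_merge hord hπ, fun ρ hρ => ?_⟩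
  by_cases hst' : Satisfies ρ s t'
  · refine hmin ρ ⟨hρ.1, hρ.2.1, hρ.2.2.1, fun r hr => ?_⟩
    rcases Finset.mem_insert.mp hr with rfl | hr
    · exact hst'
    · exact hρ.2.2.2 r (Finset.mem_of_mem_erase (Finset.mem_of_mem_erase hr))
  · obtain ⟨σ, hσ, hcost⟩ :=
      exists_feasible_merge_cost_le hwpos hwsym h2 hC hmem hmem' hts hord hρ hst'
    exact (hmin σ hσ).trans hcost

/-- on a path with `s₀ ≤ left(R) ≤ right(R) ≤ t₀` and positive edge
weights, merging two overlapping right-to-left requests `(s,t)`, `(s',t')` with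
`t' ≤ t ≤ s' ≤ s` into `(s,t')` preserves optimal rides: every optimal ride of the
merged scenario is optimal for the original. -/
theorem merge_requests_optimal (n : ℕ) (w : ℕ → ℕ → ℚ)
    (hwpos : ∀ a b, 0 < w a b) (hwsym : ∀ a b, w a b = w b a)
    (s0 t0 : ℕ) (C : Finset (ℕ × ℕ)) (hst : s0 ≤ t0) (h1 : 1 ≤ s0) (h2 : t0 ≤ n)
    (hC : ∀ v ∈ VC C, s0 ≤ v ∧ v ≤ t0)
    (s t s' t' : ℕ) (hmem : (s, t) ∈ C) (hmem' : (s', t') ∈ C)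
    (hts : t < s) (hts' : t' < s')
    (hord : t' ≤ t ∧ t ≤ s' ∧ s' ≤ s)
    (π : List ℕ)
    (hopt : Optimal ⟨pathAdj n, w, s0, t0,
        insert (s, t') ((C.erase (s, t)).erase (s', t'))⟩ π) :
    Optimal ⟨pathAdj n, w, s0, t0, C⟩ π :=
  merge_requests_optimal_general n w hwpos hwsym s0 t0 C h2 hC s t s' t' hmem hmem' hts hord π hopt

end RideSharing
end

section
/- The output C* = {(s₁,t₁),…,(s_h,t_h)} of the Normalize procedure is in normal form: t_i < s_i for every i, and (after sorting by starting node) s_i < t_{i+1} for every i < h. -/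
namespace RideSharing

/-- the output of `Normalize` is in normal form.  A terminal set `C*`
(all requests right-to-left, no merge step applicable, no drop step applicable) is
in normal form: the requests are pairwise strictly separated,
i.e. `t₁ < s₁ < t₂ < s₂ < …` after sorting. -/
theorem normalize_output_normal_form (Cstar : Finset (ℕ × ℕ))
    (hrl : ∀ r ∈ Cstar, r.2 < r.1)
    (hnomerge : ∀ r ∈ Cstar, ∀ r' ∈ Cstar, r ≠ r' →
      ¬(r'.2 ≤ r.2 ∧ r.2 ≤ r'.1 ∧ r'.1 ≤ r.1))
    (hnodrop : ∀ r ∈ Cstar, ∀ r' ∈ Cstar, r ≠ r' →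
      ¬(r'.2 ≤ r.2 ∧ r.2 < r.1 ∧ r.1 ≤ r'.1)) :
    ∀ r ∈ Cstar, ∀ r' ∈ Cstar, r ≠ r' → r.1 < r'.2 ∨ r'.1 < r.2 := by
  intro r hr r' hr' hne
  by_contra hoverlap
  -- Overlapping intervals either cross, which a merge step would resolve, or nest, which a
  -- drop step would resolve.
  have := hrl r hr
  have := hrl r' hr'
  have := hnomerge r hr r' hr' hne
  have := hnomerge r' hr' r hr hne.symm
  have := hnodrop r hr r' hr' hne
  have := hnodrop r' hr' r hr hne.symm
  omega

end RideSharing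
end

section
/- Let R = ⟨G,(s₀,t₀),C*⟩ be a scenario on a path with s₀ ≤ t₀, where C* = {(s₁,t₁),…,(s_h,t_h)} is in normal form (t_i < s_i for all i, s_i < t_{i+1} for all i < h) and s₀ ≤ t₁, s_h ≤ t₀. Then the ride s₀ ↦ s₁ ↦ t₁ ↦ s₂ ↦ t₂ ↦ … ↦ s_h ↦ t_h ↦ t₀ (concatenation of shortest monotone segments) is an optimal ride for R. -/
/-!
On a path, the cost of a ride is `∑ₑ w(e, e + 1) · cₑ`, where `cₑ` counts how often the ride
crosses the edge `(e, e + 1)`, so optimality can be checked edge by edge. Crossing `e` is a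
pseudometric on the nodes, so deleting nodes from a ride never increases `cₑ`. A feasible ride
visits `s₀, sᵢ, tᵢ, t₀` in this order, hence crosses each edge of `[tᵢ, sᵢ)` at least three
times and every other edge of `[s₀, t₀)` at least once. The canonical ride consists of monotone
segments, so its `cₑ` is the number of times its waypoints `s₀, s₁, t₁, …, s_h, t_h, t₀` change
sides of `e`; as the intervals `[tᵢ, sᵢ)` are disjoint and lie in `[s₀, t₀)`, this is three on
them and one on the rest of `[s₀, t₀)`.
-/

namespace RideSharing

/-- `1` if the monotone segment from `x` to `y` crosses the edge `(e, e + 1)`, else `0`. -/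
def crossing (e x y : ℕ) : ℚ := if min x y ≤ e ∧ e < max x y then 1 else 0

section Cost

variable (d : ℕ → ℕ → ℚ)

lemma cost_cons_cons (a b : ℕ) (l : List ℕ) : cost d (a :: b :: l) = d a b + cost d (b :: l) :=
  rfl

lemma cost_nonneg (hd : ∀ x y, 0 ≤ d x y) : ∀ l, 0 ≤ cost d l
  | [] | [_] => le_rfl
  | a :: b :: l => by rw [cost_cons_cons]; exact add_nonneg (hd a b) (cost_nonneg hd (b :: l))

lemma cost_append_cons_s8 (a : ℕ) (m : List ℕ) :
    ∀ l, cost d (l ++ a :: m) = cost d (l ++ [a]) + cost d (a :: m)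
  | [] => by simp [cost]
  | [x] => by simp [cost]
  | x :: y :: l => by
    simp only [List.cons_append, cost_cons_cons]
    rw [← List.cons_append, ← List.cons_append, cost_append_cons_s8 a m (y :: l), add_assoc]

lemma cost_append_tail {l₁ l₂ : List ℕ} (h : l₁.getLast? = l₂.head?) :
    cost d (l₁ ++ l₂.tail) = cost d l₁ + cost d l₂ := by
  rcases l₂ with _ | ⟨a, m⟩
  · simp_all [cost]
  · obtain ⟨l, rfl⟩ := List.getLast?_eq_some_iff.mp h
    rw [List.append_assoc, List.singleton_append, cost_append_cons_s8, List.tail_cons]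

lemma cost_reverse (hd : ∀ x y, d x y = d y x) : ∀ l, cost d l.reverse = cost d l
  | [] | [_] => rfl
  | x :: y :: l => by
    rw [List.reverse_cons, List.reverse_cons, List.append_assoc, List.singleton_append,
      cost_append_cons_s8, ← List.reverse_cons, cost_reverse hd (y :: l), cost_cons_cons,
      cost_cons_cons, hd]
    simp [cost, add_comm]

-- The common first point `x` is what makes the induction on the sublist go through.
lemma cost_cons_le_cons_of_sublist (hd : ∀ x y, 0 ≤ d x y)
    (htri : ∀ x y z, d x z ≤ d x y + d y z) {l₁ l₂ : List ℕ} (h : l₁.Sublist l₂) :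
    ∀ x, cost d (x :: l₁) ≤ cost d (x :: l₂) := by
  induction h with
  | slnil => exact fun _ => le_rfl
  | @cons l₁ l₂ a _ ih =>
    intro x
    have hshortcut : cost d (x :: l₁) ≤ d x a + cost d (a :: l₁) := by
      rcases l₁ with _ | ⟨b, l⟩
      · simpa [cost] using hd x a
      · simp only [cost_cons_cons]; linarith [htri x a b]
    rw [cost_cons_cons]; linarith [ih a]
  | cons_cons a _ ih => intro x; rw [cost_cons_cons, cost_cons_cons]; linarith [ih a]

lemma cost_le_of_sublist (hd : ∀ x y, 0 ≤ d x y)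
    (htri : ∀ x y z, d x z ≤ d x y + d y z) {l₁ l₂ : List ℕ} (h : l₁.Sublist l₂) :
    cost d l₁ ≤ cost d l₂ := by
  induction h with
  | slnil => exact le_rfl
  | @cons l₁ l₂ a _ ih =>
    refine ih.trans ?_
    rcases l₂ with _ | ⟨b, l⟩
    · exact cost_nonneg d hd [a]
    · rw [cost_cons_cons]; linarith [hd a b]
  | cons_cons a h _ => exact cost_cons_le_cons_of_sublist d hd htri h a

end Cost

section Crossing

variable (e : ℕ)

lemma crossing_nonneg (x y : ℕ) : 0 ≤ crossing e x y := by
  unfold crossing; split_ifs <;> norm_num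

lemma crossing_comm (x y : ℕ) : crossing e x y = crossing e y x := by
  simp only [crossing, min_comm, max_comm]

lemma crossing_of_le {x y : ℕ} (h : x ≤ y) : crossing e x y = if x ≤ e ∧ e < y then 1 else 0 := by
  rw [crossing, min_eq_left h, max_eq_right h]

lemma crossing_le_add (x y z : ℕ) : crossing e x z ≤ crossing e x y + crossing e y z := by
  unfold crossing; split_ifs <;> norm_num; omega

lemma cost_crossing_range' (k : ℕ) :
    ∀ x, cost (crossing e) (List.range' x (k + 1)) = crossing e x (x + k) := by
  induction k with
  | zero => intro x; simp [cost, crossing]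
  | succ k ih =>
    intro x
    rw [List.range'_succ, List.range'_succ, cost_cons_cons, ← List.range'_succ, ih]
    unfold crossing; split_ifs <;> norm_num <;> omega

end Crossing

lemma seg_of_le {x y : ℕ} (h : x ≤ y) : seg x y = List.range' x (y - x + 1) := by
  rw [seg, if_pos h, List.range'_eq_map_range]

lemma seg_of_lt {x y : ℕ} (h : y < x) : seg x y = (seg y x).reverse := by
  rw [seg, if_neg (by omega), seg_of_le h.le, List.reverse_range',
    show y + (x - y + 1) - 1 = x by omega]

lemma cost_crossing_seg (e x y : ℕ) : cost (crossing e) (seg x y) = crossing e x y := by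
  rcases le_or_gt x y with h | h
  · rw [seg_of_le h, cost_crossing_range', Nat.add_sub_cancel' h]
  · rw [seg_of_lt h, cost_reverse _ (crossing_comm e), seg_of_le h.le, cost_crossing_range',
      Nat.add_sub_cancel' h.le, crossing_comm]

lemma isChain_seg {n x y : ℕ} (hx : 1 ≤ x ∧ x ≤ n) (hy : 1 ≤ y ∧ y ≤ n) :
    (seg x y).IsChain (pathAdj n) := by
  have ascending : ∀ {a b}, 1 ≤ a → a ≤ b → b ≤ n → (seg a b).IsChain (pathAdj n) := by
    intro a b ha hab hb
    rw [seg_of_le hab]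
    refine (List.isChain_range' a _ 1).imp_of_mem_imp fun u v hu hv huv => ?_
    simp only [List.mem_range'_1] at hu hv
    exact ⟨Or.inl huv, by omega, by omega, by omega, by omega⟩
  rcases le_or_gt x y with h | h
  · exact ascending hx.1 h hy.2
  · rw [seg_of_lt h, List.isChain_reverse]
    exact (ascending hy.1 h.le hx.2).imp fun u v ⟨huv, hu⟩ => ⟨huv.symm, by omega⟩

lemma head?_seg (x y : ℕ) : (seg x y).head? = some x := by
  rcases le_or_gt x y with h | h
  · simp [seg_of_le h, List.head?_range']
  · rw [seg_of_lt h, List.head?_reverse, seg_of_le h.le, List.getLast?_range', if_neg (by omega)]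
    congr 1; omega

lemma getLast?_seg (x y : ℕ) : (seg x y).getLast? = some y := by
  rcases le_or_gt x y with h | h
  · rw [seg_of_le h, List.getLast?_range', if_neg (by omega)]
    congr 1; omega
  · simp [seg_of_lt h, List.getLast?_reverse, seg_of_le h.le, List.head?_range']

lemma seg_eq_dropLast_append (x y : ℕ) : seg x y = (seg x y).dropLast ++ [y] := by
  obtain ⟨l, hl⟩ := List.getLast?_eq_some_iff.mp (getLast?_seg x y)
  rw [hl, List.dropLast_concat]

lemma isChain_append_tail {α : Type*} {R : α → α → Prop} {l₁ l₂ : List α} (h₁ : l₁.IsChain R)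
    (h₂ : l₂.IsChain R) (h : l₁.getLast? = l₂.head?) : (l₁ ++ l₂.tail).IsChain R := by
  rcases l₂ with _ | ⟨a, m⟩
  · simpa using h₁
  · refine List.isChain_append.mpr ⟨h₁, h₂.tail, fun x hx y hy => ?_⟩
    rw [h, List.head?_cons, Option.mem_some_iff] at hx
    subst hx
    exact h₂.rel_head? hy

lemma exists_rideThrough_cons (x : ℕ) (l : List ℕ) : ∃ m, rideThrough (x :: l) = x :: m := by
  rcases l with _ | ⟨y, r⟩
  · exact ⟨[], rfl⟩
  · obtain ⟨m, hm⟩ := List.head?_eq_some_iff.mp (head?_seg x y)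
    exact ⟨m ++ (rideThrough (y :: r)).tail, by rw [rideThrough, hm, List.cons_append]⟩

lemma rideThrough_cons_cons (x y : ℕ) (r : List ℕ) :
    rideThrough (x :: y :: r) = (seg x y).dropLast ++ rideThrough (y :: r) := by
  obtain ⟨m, hm⟩ := exists_rideThrough_cons y r
  rw [rideThrough, hm, List.tail_cons, seg_eq_dropLast_append x y, List.dropLast_concat,
    List.append_assoc, List.singleton_append]

lemma getLast?_rideThrough : ∀ W : List ℕ, (rideThrough W).getLast? = W.getLast?
  | [] | [_] => rfl
  | x :: y :: r => by
    obtain ⟨m, hm⟩ := exists_rideThrough_cons y r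
    rw [rideThrough_cons_cons, List.getLast?_append_of_ne_nil _ (by simp [hm]),
      getLast?_rideThrough (y :: r), List.getLast?_cons_cons]

lemma mem_rideThrough {z : ℕ} : ∀ {W : List ℕ}, z ∈ W → z ∈ rideThrough W
  | [_], hz => hz
  | x :: y :: r, hz => by
    rw [rideThrough_cons_cons]
    rcases List.mem_cons.mp hz with rfl | hz
    · obtain ⟨m, hm⟩ := exists_rideThrough_cons z (y :: r)
      rw [rideThrough_cons_cons] at hm
      simp [hm]
    · exact List.mem_append_right _ (mem_rideThrough hz)

lemma rideThrough_isSuffix (x : ℕ) (V : List ℕ) :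
    ∀ U : List ℕ, (rideThrough (x :: V)).IsSuffix (rideThrough (U ++ x :: V))
  | [] => List.suffix_refl _
  | u :: U => by
    obtain ⟨y, r, hyr⟩ : ∃ y r, U ++ x :: V = y :: r := List.exists_cons_of_ne_nil (by simp)
    rw [List.cons_append, hyr, rideThrough_cons_cons, ← hyr]
    exact (rideThrough_isSuffix x V U).trans (List.suffix_append _ _)

lemma satisfies_rideThrough {x y : ℕ} {W : List ℕ} (h : [x, y].IsInfix W) :
    Satisfies (rideThrough W) x y := by
  obtain ⟨U, V, rfl⟩ := h
  rw [List.append_assoc, List.cons_append, List.cons_append, List.nil_append]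
  obtain ⟨m, hm⟩ := exists_rideThrough_cons x (y :: V)
  obtain ⟨j, hj, hjy⟩ :=
    List.mem_iff_getElem.mp (mem_rideThrough (z := y) (W := x :: y :: V) (by simp))
  obtain ⟨u, hu⟩ := rideThrough_isSuffix x (y :: V) U
  refine ⟨u.length, u.length + j, by omega, ?_, ?_⟩
  · rw [← hu, List.getElem?_append_right le_rfl, Nat.sub_self, hm]; rfl
  · rw [← hu, List.getElem?_append_right (by omega), Nat.add_sub_cancel_left,
      List.getElem?_eq_getElem hj, hjy]

lemma cost_rideThrough (d D : ℕ → ℕ → ℚ) (hD : ∀ x y, cost d (seg x y) = D x y) :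
    ∀ W : List ℕ, cost d (rideThrough W) = cost D W
  | [] | [_] => rfl
  | x :: y :: r => by
    obtain ⟨m, hm⟩ := exists_rideThrough_cons y r
    rw [rideThrough, cost_append_tail d (by rw [getLast?_seg, hm]; rfl), hD,
      cost_rideThrough d D hD (y :: r), cost_cons_cons]

lemma isChain_rideThrough {n : ℕ} :
    ∀ {W : List ℕ}, (∀ z ∈ W, 1 ≤ z ∧ z ≤ n) → (rideThrough W).IsChain (pathAdj n)
  | [], _ | [_], _ => by simp [rideThrough]
  | x :: y :: r, hW => by
    obtain ⟨m, hm⟩ := exists_rideThrough_cons y r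
    rw [rideThrough]
    refine isChain_append_tail (isChain_seg (hW x (by simp)) (hW y (by simp)))
      (isChain_rideThrough fun z hz => hW z (List.mem_cons_of_mem x hz)) ?_
    rw [getLast?_seg, hm]; rfl

lemma cost_eq_sum_crossing {n : ℕ} {w : ℕ → ℕ → ℚ} (hwsym : ∀ a b, w a b = w b a) :
    ∀ {π : List ℕ}, π.IsChain (pathAdj n) →
      cost w π = ∑ e ∈ Finset.range n, w e (e + 1) * cost (crossing e) π
  | [], _ | [_], _ => by simp [cost]
  | x :: y :: r, hπ => by
    obtain ⟨hxy, hr⟩ := List.isChain_cons_cons.mp hπ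
    have hstep : w x y = ∑ e ∈ Finset.range n, w e (e + 1) * crossing e x y := by
      obtain ⟨hadj, -, hx, -, hy⟩ := hxy
      rw [Finset.sum_eq_single (min x y)]
      · rcases hadj with rfl | rfl
        · simp [crossing]
        · simp [crossing, hwsym]
      · intro e _ he
        rw [crossing, if_neg (by omega), mul_zero]
      · intro hmin
        exact absurd (Finset.mem_range.mpr (by omega)) hmin
    simp only [cost_cons_cons, hstep, cost_eq_sum_crossing hwsym hr, mul_add,
      Finset.sum_add_distrib]

lemma sublist_of_satisfies {π : List ℕ} {a b c d : ℕ} (hhead : π.head? = some a)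
    (hsat : Satisfies π b c) (hlast : π.getLast? = some d) (hab : a ≠ b) (hbc : b ≠ c)
    (hcd : c ≠ d) : [a, b, c, d].Sublist π := by
  obtain ⟨p, q, hpq, hp, hq⟩ := hsat
  rw [List.head?_eq_getElem?] at hhead
  rw [List.getLast?_eq_getElem?] at hlast
  obtain ⟨h0, ha⟩ := List.getElem?_eq_some_iff.mp hhead
  obtain ⟨hp, hb⟩ := List.getElem?_eq_some_iff.mp hp
  obtain ⟨hq, hc⟩ := List.getElem?_eq_some_iff.mp hq
  obtain ⟨hlast, hd⟩ := List.getElem?_eq_some_iff.mp hlast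
  have hp0 : p ≠ 0 := by rintro rfl; exact hab (ha.symm.trans hb)
  have hpq' : p ≠ q := by rintro rfl; exact hbc (hb.symm.trans hc)
  have hqlast : q ≠ π.length - 1 := by rintro rfl; exact hcd (hc.symm.trans hd)
  have := List.map_getElem_sublist (l := π)
    (is := [⟨0, h0⟩, ⟨p, hp⟩, ⟨q, hq⟩, ⟨π.length - 1, hlast⟩]) (by simp [Fin.mk_lt_mk]; omega)
  simpa [ha, hb, hc, hd] using this

/-- The paper's normal form of the requests `(s₁, t₁), …, (s_h, t_h)`, indexed here from `0`,
together with `s₀ ≤ t₁` and `s_h ≤ t₀`. -/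
structure IsNormalForm (s₀ t₀ h : ℕ) (s t : ℕ → ℕ) : Prop where
  rtl : ∀ i < h, t i < s i
  sep : ∀ i, i + 1 < h → s i < t (i + 1)
  first : s₀ ≤ t 0
  last : s (h - 1) ≤ t₀

def stops (h : ℕ) (s t : ℕ → ℕ) : List ℕ := (List.range h).flatMap fun i => [s i, t i]

lemma isInfix_stops {h i : ℕ} {s t : ℕ → ℕ} (hi : i < h) : [s i, t i].IsInfix (stops h s t) :=
  List.infix_flatMap_of_mem (List.mem_range.mpr hi) fun i => [s i, t i]

namespace IsNormalForm

variable {s₀ t₀ h : ℕ} {s t : ℕ → ℕ}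

lemma s_lt_t (hN : IsNormalForm s₀ t₀ h s t) {i j : ℕ} (hij : i < j) (hj : j < h) : s i < t j := by
  induction j with
  | zero => omega
  | succ j ih =>
    rcases Nat.lt_succ_iff_lt_or_eq.mp hij with hij | rfl
    · exact (ih hij (by omega)).trans ((hN.rtl j (by omega)).trans (hN.sep j hj))
    · exact hN.sep i hj

lemma bounds (hN : IsNormalForm s₀ t₀ h s t) {i : ℕ} (hi : i < h) :
    s₀ ≤ t i ∧ t i < s i ∧ s i ≤ t₀ := by
  have ht : t 0 ≤ t i := by
    rcases Nat.eq_zero_or_pos i with rfl | hi0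
    · exact le_rfl
    · exact ((hN.rtl 0 (by omega)).trans (hN.s_lt_t hi0 hi)).le
  have hs : s i ≤ s (h - 1) := by
    rcases Nat.lt_or_ge i (h - 1) with hi' | hi'
    · exact ((hN.s_lt_t hi' (by omega)).trans (hN.rtl (h - 1) (by omega))).le
    · rw [show i = h - 1 by omega]
  exact ⟨hN.first.trans ht, hN.rtl i hi, hs.trans hN.last⟩

lemma le_and_le_of_mem (hN : IsNormalForm s₀ t₀ h s t) (hh : 0 < h) {z : ℕ}
    (hz : z ∈ s₀ :: (stops h s t ++ [t₀])) : s₀ ≤ z ∧ z ≤ t₀ := by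
  have h0 := hN.bounds hh
  simp only [stops, List.mem_cons, List.mem_append, List.mem_flatMap, List.mem_range,
    List.not_mem_nil, or_false] at hz
  rcases hz with rfl | ⟨i, hi, rfl | rfl⟩ | rfl
  · omega
  · have := hN.bounds hi; omega
  · have := hN.bounds hi; omega
  · omega

lemma of_succ (hN : IsNormalForm s₀ t₀ (h + 1) s t) : IsNormalForm s₀ (s h) h s t where
  rtl i hi := hN.rtl i (by omega)
  sep i hi := hN.sep i (by omega)
  first := hN.first
  last := by
    rcases Nat.eq_zero_or_pos h with rfl | hh
    · exact le_rfl
    · exact (hN.sep (h - 1) (by omega)).le.trans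
        (by rw [Nat.sub_add_cancel hh]; exact (hN.rtl h (by omega)).le)

lemma cost_crossing_waypoints (e : ℕ) :
    ∀ {h T : ℕ}, IsNormalForm s₀ T h s t →
      cost (crossing e) (s₀ :: (stops h s t ++ [T])) =
        crossing e s₀ T + 2 * ∑ i ∈ Finset.range h, crossing e (t i) (s i)
  | 0, T, _ => by simp [stops, cost]
  | h + 1, T, hN => by
    have hsplit : s₀ :: (stops (h + 1) s t ++ [T]) = s₀ :: stops h s t ++ s h :: [t h, T] := by
      simp [stops, List.range_succ, List.flatMap_append]
    obtain ⟨hst, hts, hsT⟩ := hN.bounds (Nat.lt_succ_self h)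
    rw [hsplit, cost_append_cons_s8, List.cons_append, cost_crossing_waypoints e hN.of_succ,
      Finset.sum_range_succ]
    simp only [cost]
    rw [crossing_comm e (s h), crossing_of_le e (hst.trans hts.le), crossing_of_le e hts.le,
      crossing_of_le e (hts.le.trans hsT), crossing_of_le e ((hst.trans hts.le).trans hsT)]
    split_ifs <;> first | ring1 | omega

lemma sum_crossing_eq_single (hN : IsNormalForm s₀ t₀ h s t) {i e : ℕ} (hi : i < h)
    (hti : t i ≤ e) (hsi : e < s i) :
    ∑ j ∈ Finset.range h, crossing e (t j) (s j) = crossing e (t i) (s i) := by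
  refine Finset.sum_eq_single i (fun j hj hji => ?_) (by simp [hi])
  have hj := Finset.mem_range.mp hj
  have := hN.bounds hj
  rcases Nat.lt_or_gt_of_ne hji with hji | hji
  · have := hN.s_lt_t hji hi
    rw [crossing, if_neg (by omega)]
  · have := hN.s_lt_t hji hj
    rw [crossing, if_neg (by omega)]

lemma cost_crossing_waypoints_le {π : List ℕ} (hN : IsNormalForm s₀ t₀ h s t) (hh : 0 < h)
    (hhead : π.head? = some s₀) (hlast : π.getLast? = some t₀)
    (hsat : ∀ i < h, Satisfies π (s i) (t i)) (e : ℕ) :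
    cost (crossing e) (s₀ :: (stops h s t ++ [t₀])) ≤ cost (crossing e) π := by
  have hsub : ∀ i < h, [s₀, s i, t i, t₀].Sublist π := fun i hi => by
    have := hN.bounds hi
    exact sublist_of_satisfies hhead (hsat i hi) hlast (by omega) (by omega) (by omega)
  have hmono {l₁ l₂ : List ℕ} (h : l₁.Sublist l₂) : cost (crossing e) l₁ ≤ cost (crossing e) l₂ :=
    cost_le_of_sublist _ (crossing_nonneg e) (crossing_le_add e) h
  rw [hN.cost_crossing_waypoints e]
  by_cases hA : ∃ i < h, t i ≤ e ∧ e < s i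
  · obtain ⟨i, hi, hti, hsi⟩ := hA
    have := hN.bounds hi
    calc crossing e s₀ t₀ + 2 * ∑ j ∈ Finset.range h, crossing e (t j) (s j)
        = cost (crossing e) [s₀, s i, t i, t₀] := by
          rw [hN.sum_crossing_eq_single hi hti hsi]; simp only [cost]; unfold crossing
          split_ifs <;> norm_num <;> omega
      _ ≤ cost (crossing e) π := hmono (hsub i hi)
  · have hsum : ∑ j ∈ Finset.range h, crossing e (t j) (s j) = 0 :=
      Finset.sum_eq_zero fun j hj => by
        have hj := Finset.mem_range.mp hj
        have := hN.bounds hj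
        rw [crossing, if_neg fun hje => hA ⟨j, hj, by omega, by omega⟩]
    calc crossing e s₀ t₀ + 2 * ∑ j ∈ Finset.range h, crossing e (t j) (s j)
        = cost (crossing e) [s₀, t₀] := by rw [hsum]; simp [cost]
      _ ≤ cost (crossing e) π := hmono ((by simp : [s₀, t₀].Sublist [s₀, s 0, t 0, t₀]).trans
          (hsub 0 hh))

end IsNormalForm

/-- for a normal-form set of requests `{(s₁,t₁),…,(s_h,t_h)}` with
`s₀ ≤ t₁` and `s_h ≤ t₀`, the ride `s₀ ↦ s₁ ↦ t₁ ↦ … ↦ s_h ↦ t_h ↦ t₀` is optimal. -/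
theorem normal_form_canonical_optimal (n : ℕ) (w : ℕ → ℕ → ℚ)
    (hwpos : ∀ a b, 0 < w a b) (hwsym : ∀ a b, w a b = w b a)
    (s0 t0 : ℕ) (h : ℕ) (s t : ℕ → ℕ) (hh : 0 < h)
    (hrl : ∀ i, i < h → t i < s i)
    (hsep : ∀ i, i + 1 < h → s i < t (i + 1))
    (hfirst : s0 ≤ t 0) (hlast : s (h - 1) ≤ t0)
    (h1 : 1 ≤ s0) (h2 : t0 ≤ n) :
    Optimal ⟨pathAdj n, w, s0, t0, (Finset.range h).image (fun i => (s i, t i))⟩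
      (rideThrough (s0 :: (((List.range h).flatMap (fun i => [s i, t i])) ++ [t0]))) := by
  have hN : IsNormalForm s0 t0 h s t := ⟨hrl, hsep, hfirst, hlast⟩
  change Optimal _ (rideThrough (s0 :: (stops h s t ++ [t0])))
  obtain ⟨m, hm⟩ := exists_rideThrough_cons s0 (stops h s t ++ [t0])
  have hchain : (rideThrough (s0 :: (stops h s t ++ [t0]))).IsChain (pathAdj n) :=
    isChain_rideThrough fun z hz =>
      ⟨h1.trans (hN.le_and_le_of_mem hh hz).1, (hN.le_and_le_of_mem hh hz).2.trans h2⟩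
  have hsat : ∀ i < h, Satisfies (rideThrough (s0 :: (stops h s t ++ [t0]))) (s i) (t i) :=
    fun i hi => satisfies_rideThrough ((isInfix_stops hi).trans ⟨[s0], [t0], rfl⟩)
  refine ⟨⟨⟨by simp [hm], hchain⟩, by simp [hm], ?_, ?_⟩, ?_⟩
  · rw [getLast?_rideThrough, ← List.cons_append, List.getLast?_concat]
  · simp only [Finset.mem_image, Finset.mem_range]
    rintro _ ⟨i, hi, rfl⟩
    exact hsat i hi
  · rintro π ⟨⟨-, hπ⟩, hhead, hlast', hreq⟩
    have hsatπ : ∀ i < h, Satisfies π (s i) (t i) := fun i hi =>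
      hreq (s i, t i) (Finset.mem_image.mpr ⟨i, Finset.mem_range.mpr hi, rfl⟩)
    change cost w _ ≤ cost w π
    rw [cost_eq_sum_crossing hwsym hchain, cost_eq_sum_crossing hwsym hπ]
    gcongr with e
    · exact (hwpos e (e + 1)).le
    · rw [cost_rideThrough _ _ (cost_crossing_seg e)]
      exact hN.cost_crossing_waypoints_le hh hhead hlast' hsatπ e

end RideSharing
end

section
/- Let R be a scenario on a path in normal form as above with s₀ ≤ left(R) ≤ right(R) ≤ t₀ and C* = {(s₁,t₁),…,(s_h,t_h)} in normal form. Every feasible ride π for R visits each node v with t_i < v < s_i for some i at least 3 times, each node v equal to some s_i or t_i at least 2 times, and each node v with s₀ ≤ v ≤ t₀ at least once. -/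
namespace RideSharing

/-!
On the path a ride moves by `±1` per step, so between two time steps it visits every node
between the two nodes it occupies there (a discrete intermediate value theorem). A backward
request `(s, t)` is served by a visit of `s` at some time `a` followed by a visit of `t` at a time
`b > a`. In normal form `s₀ ≤ t < s ≤ t₀`, so the ride crosses every node strictly between `t`
and `s` once before `a` (coming from `s₀`), once between `a` and `b`, and once after `b` (going
to `t₀`); for the same reason it meets `t` again before `a` and `s` again after `b`.
-/

theorem monotoneOn_Iio_of_le_succ {α : Type*} [Preorder α] {f : ℕ → α} {h : ℕ}
    (hf : ∀ k, k + 1 < h → f k ≤ f (k + 1)) : MonotoneOn f (Set.Iio h) := by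
  intro i _ j hj hij
  induction j, hij using Nat.le_induction with
  | base => rfl
  | succ m _ ih => exact (ih (Nat.lt_of_succ_lt hj)).trans (hf m hj)

section Interleaved

variable {h : ℕ} {s t : ℕ → ℕ}

theorem monotoneOn_targets_of_interleaved (hrl : ∀ i, i < h → t i < s i)
    (hsep : ∀ i, i + 1 < h → s i < t (i + 1)) : MonotoneOn t (Set.Iio h) :=
  monotoneOn_Iio_of_le_succ fun k hk => ((hrl k (by omega)).trans (hsep k hk)).le

theorem monotoneOn_sources_of_interleaved (hrl : ∀ i, i < h → t i < s i)
    (hsep : ∀ i, i + 1 < h → s i < t (i + 1)) : MonotoneOn s (Set.Iio h) :=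
  monotoneOn_Iio_of_le_succ fun k hk => ((hsep k hk).trans (hrl (k + 1) hk)).le

end Interleaved

section Count

variable {α : Type*} {l : List α} {i j k : ℕ} {a : α}

theorem lt_of_le_of_getElem?_ne {b : α} (hij : i ≤ j) (hi : l[i]? = some a)
    (hj : l[j]? = some b) (hab : a ≠ b) : i < j :=
  hij.lt_of_ne (by rintro rfl; exact hab (Option.some_inj.1 (hi.symm.trans hj)))

variable [BEq α] [LawfulBEq α]

theorem count_drop_lt_of_getElem?_eq (hij : i < j) (hi : l[i]? = some a) :
    (l.drop j).count a < (l.drop i).count a := by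
  obtain ⟨hil, rfl⟩ := List.getElem?_eq_some_iff.1 hi
  rw [List.drop_eq_getElem_cons hil, List.count_cons_self]
  exact Nat.lt_succ_of_le ((List.drop_sublist_drop_left l hij).count_le _)

theorem two_le_count_of_getElem?_eq (hij : i < j) (hi : l[i]? = some a)
    (hj : l[j]? = some a) : 2 ≤ l.count a := by
  have hij' := count_drop_lt_of_getElem?_eq hij hi
  have hj' := count_drop_lt_of_getElem?_eq (Nat.lt_succ_self j) hj
  exact (show 2 ≤ (l.drop i).count a by omega).trans ((List.drop_sublist i l).count_le a)

theorem three_le_count_of_getElem?_eq (hij : i < j) (hjk : j < k) (hi : l[i]? = some a)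
    (hj : l[j]? = some a) (hk : l[k]? = some a) : 3 ≤ l.count a := by
  have hij' := count_drop_lt_of_getElem?_eq hij hi
  have hjk' := count_drop_lt_of_getElem?_eq hjk hj
  have hk' := count_drop_lt_of_getElem?_eq (Nat.lt_succ_self k) hk
  exact (show 3 ≤ (l.drop i).count a by omega).trans ((List.drop_sublist i l).count_le a)

end Count

theorem exists_getElem?_eq_of_mem_uIcc {R : ℕ → ℕ → Prop}
    (hR : ∀ a b, R a b → a ≤ b + 1 ∧ b ≤ a + 1) {π : List ℕ} (hπ : π.IsChain R)
    {i j x y v : ℕ} (hij : i ≤ j) (hx : π[i]? = some x) (hy : π[j]? = some y)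
    (hv : v ∈ Set.uIcc x y) : ∃ k, i ≤ k ∧ k ≤ j ∧ π[k]? = some v := by
  induction j, hij using Nat.le_induction generalizing y with
  | base =>
    obtain rfl : x = y := Option.some_inj.1 (hx.symm.trans hy)
    rw [Set.uIcc_self, Set.mem_singleton_iff] at hv
    exact ⟨i, le_rfl, le_rfl, hv ▸ hx⟩
  | succ m _ ih =>
    obtain ⟨hm, rfl⟩ := List.getElem?_eq_some_iff.1 hy
    by_cases hvm : v ∈ Set.uIcc x π[m]
    · obtain ⟨k, hik, hkm, hk⟩ := ih (List.getElem?_eq_getElem _) hvm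
      exact ⟨k, hik, hkm.trans m.le_succ, hk⟩
    · have hstep := hR _ _ (List.isChain_iff_getElem.1 hπ m hm)
      obtain rfl : v = π[m + 1] := by rw [Set.mem_uIcc] at hv hvm; omega
      exact ⟨m + 1, by omega, le_rfl, hy⟩

theorem pathAdj_le_add_one {n a b : ℕ} (hab : pathAdj n a b) : a ≤ b + 1 ∧ b ≤ a + 1 := by
  obtain ⟨hab | hab, -⟩ := hab <;> omega

section PathRide

variable {n s0 t0 i x y v : ℕ} {π : List ℕ}

theorem exists_le_getElem?_eq (hπ : π.IsChain (pathAdj n)) (hhead : π.head? = some s0)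
    (hx : π[i]? = some x) (hv : v ∈ Set.uIcc s0 x) : ∃ k ≤ i, π[k]? = some v := by
  obtain ⟨k, -, hki, hk⟩ := exists_getElem?_eq_of_mem_uIcc (fun _ _ => pathAdj_le_add_one) hπ
    i.zero_le (List.head?_eq_getElem? ▸ hhead) hx hv
  exact ⟨k, hki, hk⟩

theorem exists_ge_getElem?_eq (hπ : π.IsChain (pathAdj n)) (hend : π.getLast? = some t0)
    (hx : π[i]? = some x) (hv : v ∈ Set.uIcc x t0) : ∃ k ≥ i, π[k]? = some v := by
  have hi : i ≤ π.length - 1 := by have := (List.getElem?_eq_some_iff.1 hx).1; omega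
  obtain ⟨k, hik, -, hk⟩ := exists_getElem?_eq_of_mem_uIcc (fun _ _ => pathAdj_le_add_one) hπ
    hi hx (List.getLast?_eq_getElem? ▸ hend) hv
  exact ⟨k, hik, hk⟩

theorem two_le_count_source_of_satisfies (hπ : π.IsChain (pathAdj n))
    (hend : π.getLast? = some t0) (hyx : y < x) (hxt : x ≤ t0) (hsat : Satisfies π x y) :
    2 ≤ π.count x := by
  obtain ⟨a, b, hab, ha, hb⟩ := hsat
  obtain ⟨k, hbk, hk⟩ := exists_ge_getElem?_eq hπ hend hb (Set.mem_uIcc.2 (.inl ⟨hyx.le, hxt⟩))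
  exact two_le_count_of_getElem?_eq
    (hab.trans_lt (lt_of_le_of_getElem?_ne hbk hb hk hyx.ne)) ha hk

theorem two_le_count_target_of_satisfies (hπ : π.IsChain (pathAdj n))
    (hhead : π.head? = some s0) (hsy : s0 ≤ y) (hyx : y < x) (hsat : Satisfies π x y) :
    2 ≤ π.count y := by
  obtain ⟨a, b, hab, ha, hb⟩ := hsat
  obtain ⟨k, hka, hk⟩ := exists_le_getElem?_eq hπ hhead ha (Set.mem_uIcc.2 (.inl ⟨hsy, hyx.le⟩))
  exact two_le_count_of_getElem?_eq
    ((lt_of_le_of_getElem?_ne hka hk ha hyx.ne).trans_le hab) hk hb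

theorem three_le_count_of_satisfies (hπ : π.IsChain (pathAdj n))
    (hhead : π.head? = some s0) (hend : π.getLast? = some t0) (hsy : s0 ≤ y) (hxt : x ≤ t0)
    (hv : v ∈ Set.Ioo y x) (hsat : Satisfies π x y) : 3 ≤ π.count v := by
  obtain ⟨hyv, hvx⟩ := hv
  obtain ⟨a, b, hab, ha, hb⟩ := hsat
  obtain ⟨k₁, hk₁a, hk₁⟩ :=
    exists_le_getElem?_eq hπ hhead ha (Set.mem_uIcc.2 (.inl ⟨by omega, hvx.le⟩))
  obtain ⟨k₂, hak₂, hk₂b, hk₂⟩ := exists_getElem?_eq_of_mem_uIcc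
    (fun _ _ => pathAdj_le_add_one) hπ hab ha hb (Set.mem_uIcc.2 (.inr ⟨hyv.le, hvx.le⟩))
  obtain ⟨k₃, hbk₃, hk₃⟩ :=
    exists_ge_getElem?_eq hπ hend hb (Set.mem_uIcc.2 (.inl ⟨hyv.le, by omega⟩))
  have h₁₂ : k₁ < k₂ := (lt_of_le_of_getElem?_ne hk₁a hk₁ ha hvx.ne).trans
    (lt_of_le_of_getElem?_ne hak₂ ha hk₂ hvx.ne')
  have h₂₃ : k₂ < k₃ := (lt_of_le_of_getElem?_ne hk₂b hk₂ hb hyv.ne').trans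
    (lt_of_le_of_getElem?_ne hbk₃ hb hk₃ hyv.ne)
  exact three_le_count_of_getElem?_eq h₁₂ h₂₃ hk₁ hk₂ hk₃

theorem one_le_count_of_mem_uIcc (hπ : π.IsChain (pathAdj n)) (hhead : π.head? = some s0)
    (hend : π.getLast? = some t0) (hv : v ∈ Set.uIcc s0 t0) : 1 ≤ π.count v := by
  obtain ⟨k, -, hk⟩ := exists_le_getElem?_eq hπ hhead (List.getLast?_eq_getElem? ▸ hend) hv
  exact List.count_pos_iff.2 (List.mem_of_getElem? hk)

end PathRide

theorem feasible_occurrence_bounds_general (n : ℕ) (w : ℕ → ℕ → ℚ)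
    (s0 t0 : ℕ) (h : ℕ) (s t : ℕ → ℕ)
    (hrl : ∀ i, i < h → t i < s i)
    (hsep : ∀ i, i + 1 < h → s i < t (i + 1))
    (hfirst : 0 < h → s0 ≤ t 0) (hlast : 0 < h → s (h - 1) ≤ t0)
    (π : List ℕ)
    (hfeas : Feasible ⟨pathAdj n, w, s0, t0,
        (Finset.range h).image (fun i => (s i, t i))⟩ π) :
    (∀ v, (∃ i, i < h ∧ t i < v ∧ v < s i) → 3 ≤ π.count v) ∧
    (∀ i, i < h → 2 ≤ π.count (s i) ∧ 2 ≤ π.count (t i)) ∧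
    (∀ v, s0 ≤ v → v ≤ t0 → 1 ≤ π.count v) := by
  obtain ⟨⟨-, hπ⟩, hhead, hend, hsat⟩ := hfeas
  have hreq : ∀ i < h, Satisfies π (s i) (t i) := fun i hi =>
    hsat _ (Finset.mem_image_of_mem _ (Finset.mem_range.2 hi))
  have hs0 : ∀ i < h, s0 ≤ t i := fun i hi =>
    (hfirst (by omega)).trans <|
      monotoneOn_targets_of_interleaved hrl hsep (Set.mem_Iio.2 (by omega)) hi i.zero_le
  have ht0 : ∀ i < h, s i ≤ t0 := fun i hi =>
    (monotoneOn_sources_of_interleaved hrl hsep hi (Set.mem_Iio.2 (by omega)) (by omega)).trans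
      (hlast (by omega))
  refine ⟨fun v ⟨i, hi, hv⟩ => ?_, fun i hi => ⟨?_, ?_⟩, fun v hv₁ hv₂ => ?_⟩
  · exact three_le_count_of_satisfies hπ hhead hend (hs0 i hi) (ht0 i hi) hv (hreq i hi)
  · exact two_le_count_source_of_satisfies hπ hend (hrl i hi) (ht0 i hi) (hreq i hi)
  · exact two_le_count_target_of_satisfies hπ hhead (hs0 i hi) (hrl i hi) (hreq i hi)
  · exact one_le_count_of_mem_uIcc hπ hhead hend (Set.mem_uIcc.2 (.inl ⟨hv₁, hv₂⟩))

/-- every feasible ride for a normal-form scenario visits each node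
strictly inside some request interval at least 3 times, each request endpoint at
least twice, and each node of `[s₀,t₀]` at least once. -/
theorem feasible_occurrence_bounds (n : ℕ) (w : ℕ → ℕ → ℚ)
    (s0 t0 : ℕ) (h : ℕ) (s t : ℕ → ℕ)
    (hrl : ∀ i, i < h → t i < s i)
    (hsep : ∀ i, i + 1 < h → s i < t (i + 1))
    (hfirst : 0 < h → s0 ≤ t 0) (hlast : 0 < h → s (h - 1) ≤ t0)
    (hst : s0 ≤ t0) (h1 : 1 ≤ s0) (h2 : t0 ≤ n)
    (π : List ℕ)
    (hfeas : Feasible ⟨pathAdj n, w, s0, t0,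
        (Finset.range h).image (fun i => (s i, t i))⟩ π) :
    (∀ v, (∃ i, i < h ∧ t i < v ∧ v < s i) → 3 ≤ π.count v) ∧
    (∀ i, i < h → 2 ≤ π.count (s i) ∧ 2 ≤ π.count (t i)) ∧
    (∀ v, s0 ≤ v → v ≤ t0 → 1 ≤ π.count v) :=
  feasible_occurrence_bounds_general n w s0 t0 h s t hrl hsep hfirst hlast π hfeas

end RideSharing
end

section
/- For any node m with m ≤ t₀ in a path scenario R, let Q_m = {(s',t') ∈ C : t' < m < s'} and define u_m = max{m, s₀} if Q_m = ∅, and u_m = max{s₀, max_{(s',t') ∈ Q_m} s'} otherwise. Then u_m equals min Ẑ_m, where Ẑ_m = {z ∈ {s₀,t₀} ∪ V_C : m ≤ z, s₀ ≤ z, and no (s,t) ∈ C has t < m and z < s}, provided that this minimum is considered over the set Ẑ_m (assumed nonempty). -/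
/-!
For `z ≥ m`, the condition defining `Ẑ_m` says exactly that `z` bounds `m`, `s₀` and the
start `s'` of every request in `Q_m`: a request `(s, t)` with `t < m` and `z < s` has
`m ≤ z < s`, so it lies in `Q_m`. These bounds are themselves nodes of `{s₀, t₀} ∪ V_C`,
so `min Ẑ_m` is their maximum, which is `u_m` because every such `s'` exceeds `m`.
-/

namespace RideSharing

theorem _root_.Finset.min'_filter_eq_max' {α : Type*} [LinearOrder α] {S T : Finset α}
    {p : α → Prop} [DecidablePred p] (hp : ∀ z, p z ↔ ∀ a ∈ T, a ≤ z) (hTS : T ⊆ S)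
    (hT : T.Nonempty) (h : (S.filter p).Nonempty) : (S.filter p).min' h = T.max' hT :=
  le_antisymm
    (Finset.min'_le _ _ (Finset.mem_filter.2 ⟨hTS (T.max'_mem hT), (hp _).2 (T.le_max' · ·)⟩))
    (Finset.le_min' _ _ _ fun _ hz => T.max'_le hT _ ((hp _).1 (Finset.mem_filter.1 hz).2))

/-- The paper's `Q_m`. -/
def spanning (C : Finset (ℕ × ℕ)) (m : ℕ) : Finset (ℕ × ℕ) :=
  C.filter (fun r => r.2 < m ∧ m < r.1)

def zhatBounds (C : Finset (ℕ × ℕ)) (m s0 : ℕ) : Finset ℕ :=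
  insert m (insert s0 ((spanning C m).image Prod.fst))

theorem zhatBounds_nonempty (C : Finset (ℕ × ℕ)) (m s0 : ℕ) : (zhatBounds C m s0).Nonempty :=
  Finset.insert_nonempty _ _

theorem lt_of_mem_image_fst_spanning {C : Finset (ℕ × ℕ)} {m a : ℕ}
    (ha : a ∈ (spanning C m).image Prod.fst) : m < a := by
  obtain ⟨r, hr, rfl⟩ := Finset.mem_image.1 ha
  exact (Finset.mem_filter.1 hr).2.2

theorem zhat_condition_iff (C : Finset (ℕ × ℕ)) (m s0 z : ℕ) :
    (m ≤ z ∧ s0 ≤ z ∧ ¬∃ r ∈ C, r.2 < m ∧ z < r.1) ↔ ∀ a ∈ zhatBounds C m s0, a ≤ z := by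
  simp only [zhatBounds, Finset.forall_mem_insert, Finset.forall_mem_image, spanning,
    Finset.mem_filter, not_exists, not_and, not_lt, and_imp, Prod.forall]
  constructor
  · rintro ⟨hmz, hs0z, hC⟩
    exact ⟨hmz, hs0z, fun s t hr ht _ => hC s t hr ht⟩
  · rintro ⟨hmz, hs0z, hQ⟩
    exact ⟨hmz, hs0z, fun s t hr ht =>
      le_of_not_gt fun hzs => hzs.not_ge (hQ s t hr ht (hmz.trans_lt hzs))⟩

theorem zhatBounds_subset {C : Finset (ℕ × ℕ)} {m s0 t0 : ℕ} (hm : m ∈ VC C ∪ {s0, t0}) :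
    zhatBounds C m s0 ⊆ insert s0 (insert t0 (VC C)) := by
  have hQ : (spanning C m).image Prod.fst ⊆ VC C := fun a ha =>
    Finset.mem_union_left _ (Finset.image_subset_image (Finset.filter_subset _ C) ha)
  simp only [zhatBounds, Finset.insert_subset_iff, Finset.mem_insert, true_or, true_and]
  refine ⟨?_, hQ.trans fun a ha => by simp [ha]⟩
  simp only [Finset.mem_union, Finset.mem_insert, Finset.mem_singleton] at hm
  tauto

theorem max'_zhatBounds_of_spanning_eq_empty {C : Finset (ℕ × ℕ)} {m s0 : ℕ}
    (hQ : spanning C m = ∅) :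
    (zhatBounds C m s0).max' (zhatBounds_nonempty C m s0) = max m s0 := by
  simp only [zhatBounds, hQ, Finset.image_empty, insert_empty_eq,
    Finset.max'_insert _ _ (Finset.singleton_nonempty s0), Finset.max'_singleton]

theorem max'_zhatBounds_of_spanning_nonempty {C : Finset (ℕ × ℕ)} {m s0 : ℕ}
    (hQ : (spanning C m).Nonempty) :
    (zhatBounds C m s0).max' (zhatBounds_nonempty C m s0) =
      max s0 (((spanning C m).image Prod.fst).max' (hQ.image Prod.fst)) := by
  have hm := lt_of_mem_image_fst_spanning (Finset.max'_mem _ (hQ.image Prod.fst))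
  unfold zhatBounds
  rw [Finset.max'_insert _ _ (Finset.insert_nonempty _ _),
    Finset.max'_insert _ _ (hQ.image Prod.fst)]
  exact max_eq_right (hm.le.trans (le_max_right _ _))

set_option maxHeartbeats 1000000 in
theorem min_Zhat_eq_general (s0 t0 : ℕ) (C : Finset (ℕ × ℕ)) (m : ℕ)
    (hm : m ∈ VC C ∪ {s0, t0}) :
    ∀ hZ : ((insert s0 (insert t0 (VC C))).filter
        (fun z => m ≤ z ∧ s0 ≤ z ∧ ¬∃ r ∈ C, r.2 < m ∧ z < r.1)).Nonempty,
      (C.filter (fun r => r.2 < m ∧ m < r.1) = ∅ →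
        ((insert s0 (insert t0 (VC C))).filter
          (fun z => m ≤ z ∧ s0 ≤ z ∧ ¬∃ r ∈ C, r.2 < m ∧ z < r.1)).min' hZ
          = max m s0) ∧
      (∀ hQ : (C.filter (fun r => r.2 < m ∧ m < r.1)).Nonempty,
        ((insert s0 (insert t0 (VC C))).filter
          (fun z => m ≤ z ∧ s0 ≤ z ∧ ¬∃ r ∈ C, r.2 < m ∧ z < r.1)).min' hZ
          = max s0 (((C.filter (fun r => r.2 < m ∧ m < r.1)).image Prod.fst).max'
              (hQ.image Prod.fst))) := by
  intro hZ
  rw [Finset.min'_filter_eq_max' (zhat_condition_iff C m s0) (zhatBounds_subset hm)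
    (zhatBounds_nonempty C m s0)]
  exact ⟨max'_zhatBounds_of_spanning_eq_empty, max'_zhatBounds_of_spanning_nonempty⟩

set_option maxHeartbeats 1000000 in
/-- `u_m`, defined from `Q_m = {(s',t') ∈ C : t' < m < s'}`,
equals `min Ẑ_m`. -/
theorem min_Zhat_eq (s0 t0 : ℕ) (C : Finset (ℕ × ℕ)) (m : ℕ)
    (hm : m ∈ VC C ∪ {s0, t0}) (hmt0 : m ≤ t0) :
    ∀ hZ : ((insert s0 (insert t0 (VC C))).filter
        (fun z => m ≤ z ∧ s0 ≤ z ∧ ¬∃ r ∈ C, r.2 < m ∧ z < r.1)).Nonempty,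
      (C.filter (fun r => r.2 < m ∧ m < r.1) = ∅ →
        ((insert s0 (insert t0 (VC C))).filter
          (fun z => m ≤ z ∧ s0 ≤ z ∧ ¬∃ r ∈ C, r.2 < m ∧ z < r.1)).min' hZ
          = max m s0) ∧
      (∀ hQ : (C.filter (fun r => r.2 < m ∧ m < r.1)).Nonempty,
        ((insert s0 (insert t0 (VC C))).filter
          (fun z => m ≤ z ∧ s0 ≤ z ∧ ¬∃ r ∈ C, r.2 < m ∧ z < r.1)).min' hZ
          = max s0 (((C.filter (fun r => r.2 < m ∧ m < r.1)).image Prod.fst).max'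
              (hQ.image Prod.fst))) :=
  min_Zhat_eq_general s0 t0 C m hm

end RideSharing
end
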